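/- Let H ∈ 𝕊^d_{++} and let Q₀ ⪰ H. Define Q_{k+1} = SR1(Q_k, H, u_k) with any choice of u_k satisfying (Q_k − H)u_k ≠ 0 whenever Q_k ≠ H (and Q_{k+1} = Q_k otherwise). Then the sequence tr(Q_k − H) is nonincreasing, and tr(Q_{k+1} − H) ≤ tr(Q_k − H) − λ where λ = ((Q_k−H)u_k)ᵀ((Q_k−H)u_k)/(u_kᵀ(Q_k−H)u_k) ≥ 0. -/

import Mathlib

/-!
For `A` positive semidefinite, `A - (uᵀAu)⁻¹ (Au)(Au)ᵀ` is again positive semidefinite: its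
quadratic form at `x` is `xᵀAx - (xᵀAu)² / uᵀAu`, which is nonnegative by Cauchy–Schwarz for the
semi-inner product `xᵀAy`. So every residual `Q_k - H` stays positive semidefinite, the decrement
`‖(Q_k - H)u_k‖² / u_kᵀ(Q_k - H)u_k` is nonnegative, and by linearity of the trace it is exactly
the drop of `tr (Q_k - H)` in an SR1 step.
-/

open Matrix

/-- The SR1 (symmetric rank-one) update. -/
noncomputable def SR1 {d : ℕ} (Q H : Matrix (Fin d) (Fin d) ℝ) (u : Fin d → ℝ) :
    Matrix (Fin d) (Fin d) ℝ :=
  Q - (u ⬝ᵥ (Q - H).mulVec u)⁻¹ • vecMulVec ((Q - H).mulVec u) ((Q - H).mulVec u)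

namespace Matrix

variable {n : Type*} [Fintype n] {A : Matrix n n ℝ}

theorem PosSemidef.dotProduct_mulVec_mul_le (hA : A.PosSemidef) (x y : n → ℝ) :
    (x ⬝ᵥ A *ᵥ y) * (y ⬝ᵥ A *ᵥ x) ≤ (x ⬝ᵥ A *ᵥ x) * (y ⬝ᵥ A *ᵥ y) := by
  classical
  simpa only [toLinearMap₂'_apply'] using
    LinearMap.BilinForm.apply_mul_apply_le_of_forall_zero_le (toLinearMap₂' ℝ A)
      (fun z => by simpa [toLinearMap₂'_apply'] using hA.dotProduct_mulVec_nonneg z) x y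

theorem IsHermitian.dotProduct_mulVec_comm (hA : A.IsHermitian) (x y : n → ℝ) :
    x ⬝ᵥ A *ᵥ y = y ⬝ᵥ A *ᵥ x := by
  rw [dotProduct_mulVec, ← mulVec_transpose, ← conjTranspose_eq_transpose_of_trivial, hA.eq,
    dotProduct_comm]

theorem PosSemidef.sub_inv_smul_vecMulVec_mulVec (hA : A.PosSemidef) (u : n → ℝ) :
    (A - (u ⬝ᵥ A *ᵥ u)⁻¹ • vecMulVec (A *ᵥ u) (A *ᵥ u)).PosSemidef := by
  refine .of_dotProduct_mulVec_nonneg ?_ fun x => ?_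
  · have hv := (posSemidef_vecMulVec_self_star (A *ᵥ u)).isHermitian
    rw [star_trivial] at hv
    exact hA.isHermitian.sub (hv.smul (.all _))
  · have hcs := hA.dotProduct_mulVec_mul_le x u
    rw [hA.isHermitian.dotProduct_mulVec_comm u x] at hcs
    simp only [star_trivial, sub_mulVec, smul_mulVec, vecMulVec_mulVec, dotProduct_sub,
      dotProduct_smul, dotProduct_comm (A *ᵥ u) x, MulOpposite.smul_eq_mul_unop,
      MulOpposite.unop_op, smul_eq_mul]
    have hx : 0 ≤ x ⬝ᵥ A *ᵥ x := by simpa using hA.dotProduct_mulVec_nonneg x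
    have hu : 0 ≤ u ⬝ᵥ A *ᵥ u := by simpa using hA.dotProduct_mulVec_nonneg u
    -- if `uᵀAu = 0`, its junk inverse `0` makes the correction vanish
    rcases hu.eq_or_lt with hc | hc
    · simpa [← hc] using hx
    · rw [sub_nonneg, inv_mul_le_iff₀ hc]
      linarith

end Matrix

theorem SR1_sub {d : ℕ} (Q H : Matrix (Fin d) (Fin d) ℝ) (u : Fin d → ℝ) :
    SR1 Q H u - H =
      (Q - H) - (u ⬝ᵥ (Q - H) *ᵥ u)⁻¹ • vecMulVec ((Q - H) *ᵥ u) ((Q - H) *ᵥ u) :=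
  sub_right_comm _ _ _

theorem trace_SR1_sub {d : ℕ} (Q H : Matrix (Fin d) (Fin d) ℝ) (u : Fin d → ℝ) :
    (SR1 Q H u - H).trace =
      (Q - H).trace - ((Q - H) *ᵥ u ⬝ᵥ (Q - H) *ᵥ u) / (u ⬝ᵥ (Q - H) *ᵥ u) := by
  rw [SR1_sub, trace_sub, trace_smul, trace_vecMulVec, smul_eq_mul, div_eq_inv_mul]

theorem Matrix.PosSemidef.SR1_sub {d : ℕ} {Q H : Matrix (Fin d) (Fin d) ℝ}
    (h : (Q - H).PosSemidef) (u : Fin d → ℝ) : (SR1 Q H u - H).PosSemidef := by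
  rw [_root_.SR1_sub]
  exact h.sub_inv_smul_vecMulVec_mulVec u

theorem sr1_trace_potential_general {d : ℕ} (H : Matrix (Fin d) (Fin d) ℝ)
    (Q : ℕ → Matrix (Fin d) (Fin d) ℝ) (u : ℕ → (Fin d → ℝ))
    (hQ0 : (Q 0 - H).PosSemidef)
    (hstep : ∀ k : ℕ,
      (Q k = H → Q (k + 1) = Q k) ∧
      (Q k ≠ H →
        (Q k - H).mulVec (u k) ≠ 0 ∧ Q (k + 1) = SR1 (Q k) H (u k))) :
    (∀ k : ℕ, (Q (k + 1) - H).trace ≤ (Q k - H).trace) ∧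
    (∀ k : ℕ, Q k ≠ H →
      0 ≤ ((Q k - H).mulVec (u k) ⬝ᵥ (Q k - H).mulVec (u k)) /
            (u k ⬝ᵥ (Q k - H).mulVec (u k)) ∧
      (Q (k + 1) - H).trace ≤ (Q k - H).trace -
        ((Q k - H).mulVec (u k) ⬝ᵥ (Q k - H).mulVec (u k)) /
          (u k ⬝ᵥ (Q k - H).mulVec (u k))) := by
  have hres : ∀ k, (Q k - H).PosSemidef := by
    intro k
    induction k with
    | zero => exact hQ0
    | succ k ih =>
      by_cases hk : Q k = H
      · rwa [(hstep k).1 hk]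
      · rw [((hstep k).2 hk).2]
        exact ih.SR1_sub (u k)
  have hdrop : ∀ k, Q k ≠ H →
      (Q (k + 1) - H).trace = (Q k - H).trace -
        ((Q k - H) *ᵥ u k ⬝ᵥ (Q k - H) *ᵥ u k) / (u k ⬝ᵥ (Q k - H) *ᵥ u k) := fun k hk => by
    rw [((hstep k).2 hk).2, trace_SR1_sub]
  have hdecr_nonneg :
      ∀ k, 0 ≤ ((Q k - H) *ᵥ u k ⬝ᵥ (Q k - H) *ᵥ u k) / (u k ⬝ᵥ (Q k - H) *ᵥ u k) :=
    fun k => div_nonneg (dotProduct_self_star_nonneg _)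
      (by simpa using (hres k).dotProduct_mulVec_nonneg (u k))
  refine ⟨fun k => ?_, fun k hk => ⟨hdecr_nonneg k, (hdrop k hk).le⟩⟩
  by_cases hk : Q k = H
  · rw [(hstep k).1 hk]
  · linarith [hdrop k hk, hdecr_nonneg k]

/-- tr(Q_k − H) is a nonincreasing potential for SR1 iterations, and each
SR1 step decreases it by λ = ‖(Q_k−H)u_k‖²/(u_kᵀ(Q_k−H)u_k) ≥ 0. -/
theorem sr1_trace_potential {d : ℕ} (H : Matrix (Fin d) (Fin d) ℝ) (hH : H.PosDef)
    (Q : ℕ → Matrix (Fin d) (Fin d) ℝ) (u : ℕ → (Fin d → ℝ))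
    (hQ0 : (Q 0 - H).PosSemidef)
    (hstep : ∀ k : ℕ,
      (Q k = H → Q (k + 1) = Q k) ∧
      (Q k ≠ H →
        (Q k - H).mulVec (u k) ≠ 0 ∧ Q (k + 1) = SR1 (Q k) H (u k))) :
    (∀ k : ℕ, (Q (k + 1) - H).trace ≤ (Q k - H).trace) ∧
    (∀ k : ℕ, Q k ≠ H →
      0 ≤ ((Q k - H).mulVec (u k) ⬝ᵥ (Q k - H).mulVec (u k)) /
            (u k ⬝ᵥ (Q k - H).mulVec (u k)) ∧
      (Q (k + 1) - H).trace ≤ (Q k - H).trace -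
        ((Q k - H).mulVec (u k) ⬝ᵥ (Q k - H).mulVec (u k)) /
          (u k ⬝ᵥ (Q k - H).mulVec (u k))) :=
  sr1_trace_potential_general H Q u hQ0 hstep
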